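/- Let x* be an η-stationary point of (SCO) for some η > 0, and suppose there exist m_{2s} > 0 and a neighborhood N of x* such that f(x) ≥ f(x*) + ⟨∇f(x*), x − x*⟩ + (m_{2s}/2)‖x − x*‖² for every s-sparse x ∈ N. Then x* is a strictly local minimizer of (SCO): there is a neighborhood N' of x* such that f(x) > f(x*) for every s-sparse x ∈ N' with x ≠ x*. -/

import Mathlib

open Finset Filter Topology

noncomputable section

variable {n : ℕ}

/-- Euclidean space ℝ^n -/
abbrev Euc (n : ℕ) := EuclideanSpace ℝ (Fin n)

/-- support of a vector as a Finset -/
def supp (x : Euc n) : Finset (Fin n) := Finset.univ.filter (fun i => x i ≠ 0)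

/-- `x` is `s`-sparse, i.e. `‖x‖₀ ≤ s` -/
def Sparse (s : ℕ) (x : Euc n) : Prop := (supp x).card ≤ s

/-- hard-thresholding operator: the set of best s-sparse approximations of `x` -/
def HardThr (s : ℕ) (x : Euc n) : Set (Euc n) :=
  {z | Sparse s z ∧ ∀ w : Euc n, Sparse s w → ‖x - z‖ ≤ ‖x - w‖}

/-- Hessian of `f` at `x` as a continuous linear map -/
def hess (f : Euc n → ℝ) (x : Euc n) : Euc n →L[ℝ] Euc n := fderiv ℝ (gradient f) x

/-- `x` is an η-stationary point of (SCO) -/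
def EtaStationary (f : Euc n → ℝ) (s : ℕ) (η : ℝ) (x : Euc n) : Prop :=
  x ∈ HardThr s (x - η • gradient f x)

/-- the collection `T(x;η)` of best s-support index sets of `x - η ∇f(x)` -/
def TT (f : Euc n → ℝ) (s : ℕ) (η : ℝ) (x : Euc n) : Set (Finset (Fin n)) :=
  {T | T.card = s ∧ ∃ z ∈ HardThr s (x - η • gradient f x), supp z ⊆ T}

/-- the map `F_η(x;T)`: gradient entries on `T`, `x` entries on `Tᶜ` -/
def Fmap (f : Euc n → ℝ) (T : Finset (Fin n)) (x : Euc n) : Euc n :=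
  WithLp.toLp 2 (fun i => if i ∈ T then gradient f x i else x i)

/-- the point `x^k(α)` of the line search -/
def stepPt (T : Finset (Fin n)) (x d : Euc n) (a : ℝ) : Euc n :=
  WithLp.toLp 2 (fun i => if i ∈ T then x i + a * d i else 0)

/-- `f` is `M`-restricted strongly smooth (`M_{2s}`-RSS) -/
def RSS (f : Euc n → ℝ) (s : ℕ) (M : ℝ) : Prop :=
  ∀ x y : Euc n, Sparse s x → (supp x ∪ supp y).card ≤ 2 * s →
    (inner ℝ y (hess f x y) : ℝ) ≤ M * ‖y‖ ^ 2

/-- `f` is `m`-restricted strongly convex (`m_{2s}`-RSC) -/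
def RSC (f : Euc n → ℝ) (s : ℕ) (m : ℝ) : Prop :=
  ∀ x y : Euc n, Sparse s x → (supp x ∪ supp y).card ≤ 2 * s →
    m * ‖y‖ ^ 2 ≤ (inner ℝ y (hess f x y) : ℝ)

/-- `f` is `m`-restricted strongly convex on a set `U` (e.g. a neighborhood) -/
def RSCOn (f : Euc n → ℝ) (s : ℕ) (m : ℝ) (U : Set (Euc n)) : Prop :=
  ∀ z ∈ U, Sparse s z → ∀ y : Euc n, (supp z ∪ supp y).card ≤ 2 * s →
    m * ‖y‖ ^ 2 ≤ (inner ℝ y (hess f z y) : ℝ)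

/-- norm of the subvector of `v` indexed by `T` -/
def normOn (T : Finset (Fin n)) (v : Euc n) : ℝ := Real.sqrt (∑ i ∈ T, (v i) ^ 2)

/-- `f` is locally restricted Hessian Lipschitz continuous at `xs` with constant `L`:
for all `y, z` in `N_s(xs) = {z : supp xs ⊆ supp z, ‖z‖₀ ≤ s}` and every `T ⊇ supp xs`
with `|T| ≤ s`, the row-submatrix `∇²_{T:}` is `L`-Lipschitz (in operator norm). -/
def RestrictedHessLip (f : Euc n → ℝ) (s : ℕ) (xs : Euc n) (L : ℝ) : Prop :=
  ∀ T : Finset (Fin n), T.card ≤ s → supp xs ⊆ T →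
    ∀ y z : Euc n, supp xs ⊆ supp y → Sparse s y → supp xs ⊆ supp z → Sparse s z →
      ∀ w : Euc n, normOn T (hess f y w - hess f z w) ≤ L * ‖y - z‖ * ‖w‖

/-- the restricted Newton direction: `d_{T^c} = -x_{T^c}` and
`∇²_T f(x) d_T = ∇²_{T,T^c} f(x) x_{T^c} - ∇_T f(x)`
(equivalently `(∇²f(x) d)_T = -∇_T f(x)` given `d_{T^c} = -x_{T^c}`). -/
def IsNewtonDir (f : Euc n → ℝ) (T : Finset (Fin n)) (x d : Euc n) : Prop :=
  (∀ i ∉ T, d i = -x i) ∧ (∀ i ∈ T, hess f x d i = -(gradient f x) i)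

/-- the restricted gradient direction -/
def IsGradDir (f : Euc n → ℝ) (T : Finset (Fin n)) (x d : Euc n) : Prop :=
  (∀ i ∈ T, d i = -(gradient f x) i) ∧ (∀ i ∉ T, d i = -x i)

/-- acceptance condition for the Newton direction:
`⟨∇_T f(x), d_T⟩ ≤ -γ‖d‖² + ‖x_{T^c}‖²/(4η)` -/
def Accept (f : Euc n → ℝ) (γ η : ℝ) (T : Finset (Fin n)) (x d : Euc n) : Prop :=
  ∑ i ∈ T, gradient f x i * d i ≤ -γ * ‖d‖ ^ 2 + (∑ i ∈ Tᶜ, (x i) ^ 2) / (4 * η)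

/-- the search direction of NHTP: Newton direction if it exists and is accepted,
otherwise the restricted gradient direction -/
def SearchDir (f : Euc n → ℝ) (γ η : ℝ) (T : Finset (Fin n)) (x d : Euc n) : Prop :=
  (IsNewtonDir f T x d ∧ Accept f γ η T x d) ∨
  (IsGradDir f T x d ∧ ¬ ∃ dN : Euc n, IsNewtonDir f T x dN ∧ Accept f γ η T x dN)

/-- the Armijo inequality at steplength `a` -/
def ArmijoIneq (f : Euc n → ℝ) (σ : ℝ) (T : Finset (Fin n)) (x d : Euc n) (a : ℝ) : Prop :=
  f (stepPt T x d a) ≤ f x + σ * a * (inner ℝ (gradient f x) d : ℝ)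

/-- `\barα := min{(1-2σ)/(M/γ - σ), 1}` -/
def barAlpha (M γ σ : ℝ) : ℝ := min ((1 - 2 * σ) / (M / γ - σ)) 1

/-- `\barη := min{γ \barα β / M², \barα β, 1/(4M)}` -/
def barEta (M γ σ β : ℝ) : ℝ :=
  min (γ * (barAlpha M γ σ * β) / M ^ 2) (min (barAlpha M γ σ * β) (1 / (4 * M)))

/-- the sequences `(x^k, T_k, d^k, α_k)` are generated by the NHTP algorithm -/
structure NHTP (f : Euc n → ℝ) (s : ℕ) (γ σ β η : ℝ)
    (x : ℕ → Euc n) (T : ℕ → Finset (Fin n)) (d : ℕ → Euc n) (α : ℕ → ℝ) : Prop where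
  sparse0 : Sparse s (x 0)
  mem : ∀ k, T k ∈ TT f s η (x k)
  dir : ∀ k, SearchDir f γ η (T k) (x k) (d k)
  alpha : ∀ k, ∃ ℓ : ℕ, α k = β ^ ℓ ∧ ArmijoIneq f σ (T k) (x k) (d k) (β ^ ℓ) ∧
      ∀ m' < ℓ, ¬ ArmijoIneq f σ (T k) (x k) (d k) (β ^ m')
  update : ∀ k, x (k + 1) = stepPt (T k) (x k) (d k) (α k)

/-- `x_{(s)}`: the s-th largest absolute value among the entries of `x` -/
def nthAbs (x : Euc n) (s : ℕ) : ℝ :=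
  ((Finset.univ.val.map (fun i => |x i|)).sort (· ≤ ·)).getD (n - s) 0

end

/-!
Stationarity forces `∇f(x*)` to vanish on `supp x*`, and everywhere when `‖x*‖₀ < s`. When
`‖x*‖₀ = s`, every `s`-sparse point close enough to `x*` has the same support as `x*`. In both
cases the linear term of the growth condition vanishes near `x*`, leaving
`f x ≥ f x* + m/2 ‖x - x*‖²`.
-/

lemma mem_supp {x : Euc n} {i : Fin n} : i ∈ supp x ↔ x i ≠ 0 := by
  simp [supp]

lemma eventually_supp_subset_supp (x : Euc n) : ∀ᶠ y in 𝓝 x, supp x ⊆ supp y := by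
  refine (Finset.eventually_all (supp x)).2 fun i hi => ?_
  have hcont : Continuous fun y : Euc n => y i := PiLp.continuous_apply 2 _ i
  exact hcont.continuousAt.eventually_ne (mem_supp.1 hi) |>.mono fun _ => mem_supp.2

lemma supp_update_subset (z : Euc n) (i : Fin n) (a : ℝ) :
    supp (WithLp.toLp 2 (Function.update z.ofLp i a)) ⊆ insert i (supp z) := by
  intro j hj
  rcases eq_or_ne j i with rfl | hji
  · exact Finset.mem_insert_self _ _
  · rw [mem_supp] at hj
    exact Finset.mem_insert_of_mem (mem_supp.2 (by simpa [Function.update_of_ne hji] using hj))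

lemma norm_sub_update_sq (u z : Euc n) (i : Fin n) :
    ‖u - WithLp.toLp 2 (Function.update z.ofLp i (u i))‖ ^ 2 + (u i - z i) ^ 2 = ‖u - z‖ ^ 2 := by
  simp only [EuclideanSpace.norm_sq_eq, Real.norm_eq_abs, sq_abs, PiLp.sub_apply]
  rw [← Finset.add_sum_erase _ _ (Finset.mem_univ i), ← Finset.add_sum_erase _ _ (Finset.mem_univ i)]
  rw [Finset.sum_congr rfl fun j hj => by rw [Function.update_of_ne (Finset.ne_of_mem_erase hj)]]
  simp

/-- If `z i ≠ u i`, copying `u i` into `z` keeps it `s`-sparse and brings it strictly closer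
to `u`. -/
lemma apply_eq_of_mem_hardThr {s : ℕ} {u z : Euc n} (hz : z ∈ HardThr s u) {i : Fin n}
    (hi : z i ≠ 0 ∨ (supp z).card < s) : z i = u i := by
  by_contra hne
  set w : Euc n := WithLp.toLp 2 (Function.update z.ofLp i (u i))
  have hw : Sparse s w := by
    refine (Finset.card_le_card (supp_update_subset z i (u i))).trans ?_
    rcases hi with hi | hi
    · rw [Finset.insert_eq_of_mem (mem_supp.2 hi)]
      exact hz.1
    · exact (Finset.card_insert_le _ _).trans hi
  have hcloser : ‖u - w‖ ^ 2 < ‖u - z‖ ^ 2 := by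
    rw [← norm_sub_update_sq u z i]
    exact lt_add_of_pos_right _ (sq_pos_of_ne_zero (sub_ne_zero.2 (Ne.symm hne)))
  have := pow_le_pow_left₀ (norm_nonneg _) (hz.2 w hw) 2
  linarith

lemma EtaStationary.gradient_apply_eq_zero {f : Euc n → ℝ} {s : ℕ} {η : ℝ} {x : Euc n}
    (hx : EtaStationary f s η x) (hη : η ≠ 0) {i : Fin n} (hi : x i ≠ 0 ∨ (supp x).card < s) :
    gradient f x i = 0 := by
  have h : x i = x i - η * gradient f x i := apply_eq_of_mem_hardThr hx hi
  exact (mul_eq_zero.1 (by linarith : η * gradient f x i = 0)).resolve_left hη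

lemma EtaStationary.eventually_inner_gradient_eq_zero {f : Euc n → ℝ} {s : ℕ} {η : ℝ}
    {x : Euc n} (hx : EtaStationary f s η x) (hη : η ≠ 0) :
    ∀ᶠ y in 𝓝 x, Sparse s y → (inner ℝ (gradient f x) (y - x) : ℝ) = 0 := by
  filter_upwards [eventually_supp_subset_supp x] with y hxy hy
  have hcoord : ∀ i, gradient f x i = 0 ∨ y i = x i := by
    intro i
    by_cases hi : x i ≠ 0 ∨ (supp x).card < s
    · exact .inl (hx.gradient_apply_eq_zero hη hi)
    · simp only [not_or, not_not, not_lt] at hi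
      have hsupp : supp x = supp y := Finset.eq_of_subset_of_card_le hxy (hy.trans hi.2)
      have hyi : i ∉ supp y := hsupp ▸ fun h => mem_supp.1 h hi.1
      exact .inr (by rw [hi.1]; simpa [mem_supp] using hyi)
  rw [PiLp.inner_apply]
  refine Finset.sum_eq_zero fun i _ => ?_
  rcases hcoord i with h | h <;> simp [h]

theorem stmt_16_general {n s : ℕ} (f : Euc n → ℝ)
    (η : ℝ) (hη : 0 < η) (xs : Euc n) (hstat : EtaStationary f s η xs)
    (m : ℝ) (hm : 0 < m) (U : Set (Euc n)) (hU : U ∈ nhds xs)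
    (hgrowth : ∀ x ∈ U, Sparse s x →
      f xs + (inner ℝ (gradient f xs) (x - xs) : ℝ) + m / 2 * ‖x - xs‖ ^ 2 ≤ f x) :
    ∃ V ∈ nhds xs, ∀ x ∈ V, Sparse s x → x ≠ xs → f xs < f x := by
  refine ⟨_, inter_mem hU (hstat.eventually_inner_gradient_eq_zero hη.ne'), ?_⟩
  rintro x ⟨hxU, hinner⟩ hx hne
  have hgrow := hgrowth x hxU hx
  rw [hinner hx] at hgrow
  have : 0 < m / 2 * ‖x - xs‖ ^ 2 := by
    have := norm_pos_iff.2 (sub_ne_zero.2 hne)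
    positivity
  linarith

/-- an η-stationary point at which `f` satisfies a restricted strong
convexity growth condition is a strictly local minimizer of (SCO). -/
theorem stmt_16 {n s : ℕ} (hs : 1 ≤ s) (f : Euc n → ℝ) (hf : ContDiff ℝ 2 f)
    (η : ℝ) (hη : 0 < η) (xs : Euc n) (hstat : EtaStationary f s η xs)
    (m : ℝ) (hm : 0 < m) (U : Set (Euc n)) (hU : U ∈ nhds xs)
    (hgrowth : ∀ x ∈ U, Sparse s x →
      f xs + (inner ℝ (gradient f xs) (x - xs) : ℝ) + m / 2 * ‖x - xs‖ ^ 2 ≤ f x) :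
    ∃ V ∈ nhds xs, ∀ x ∈ V, Sparse s x → x ≠ xs → f xs < f x :=
  stmt_16_general f η hη xs hstat m hm U hU hgrowth
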